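/- Let d ≥ 1, r > 0, n ≥ 1 and ℓ(n) > 0 with δ(n) = ℓ(n)/⌈n^(1/d)⌉ > 3r. Then any continuous path in [0, ℓ(n)]^d that comes within distance r of every one of at least ⌊n/3^d⌋ points whose pairwise distances are at least δ(n) has length at least (⌊n/3^d⌋ − 1)·(δ(n) − 2r). -/
import Mathlib


/-- Lower bound on path length: a 1-Lipschitz (arc-length) path on [0, L] that
comes within distance r of each of m = ⌊n/3^d⌋ points with pairwise distances
at least δ > 3r has length L ≥ (m − 1)·(δ − 2r). -/
theorem stmt_17 (d n : ℕ) (hd : 1 ≤ d) (r δ ℓ L : ℝ) (hr : 0 < r)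
    (hδdef : δ = ℓ / (⌈(n : ℝ) ^ ((1 : ℝ) / d)⌉ : ℝ)) (hδ : 3 * r < δ)
    (m : ℕ) (hm : m = n / 3 ^ d)
    (pts : Fin m → EuclideanSpace ℝ (Fin d))
    (hptsIn : ∀ i, ∀ j : Fin d, pts i j ∈ Set.Icc (0 : ℝ) ℓ)
    (hsep : ∀ i j : Fin m, i ≠ j → δ ≤ dist (pts i) (pts j))
    (γ : ℝ → EuclideanSpace ℝ (Fin d)) (hL : 0 ≤ L)
    (hγ : ∀ s t : ℝ, dist (γ s) (γ t) ≤ |s - t|)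
    (hγIn : ∀ t ∈ Set.Icc (0 : ℝ) L, ∀ j : Fin d, γ t j ∈ Set.Icc (0 : ℝ) ℓ)
    (hvisit : ∀ i : Fin m, ∃ t ∈ Set.Icc (0 : ℝ) L, dist (γ t) (pts i) ≤ r) :
    ((m : ℝ) - 1) * (δ - 2 * r) ≤ L := by
  have hc : 0 < δ - 2 * r := by linarith
  rcases Nat.eq_zero_or_pos m with hm0 | hm1
  · subst hm0
    simp only [Nat.cast_zero]
    nlinarith
  choose t ht hdist using hvisit
  have hsep' : ∀ i j : Fin m, i ≠ j → δ - 2 * r ≤ |t i - t j| := by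
    intro i j hij
    have h1 := hsep i j hij
    have h2 := hγ (t i) (t j)
    have h3 := dist_triangle4 (pts i) (γ (t i)) (γ (t j)) (pts j)
    have h4 : dist (pts i) (γ (t i)) ≤ r := by rw [dist_comm]; exact hdist i
    have h5 := hdist j
    linarith
  set σ := Tuple.sort t with hσ
  set s : Fin m → ℝ := t ∘ σ with hs
  have hmono : Monotone s := Tuple.monotone_sort t
  have hsep'' : ∀ i j : Fin m, i ≠ j → δ - 2 * r ≤ |s i - s j| := by
    intro i j hij
    exact hsep' (σ i) (σ j) (fun h => hij (σ.injective h))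
  have key : ∀ k : ℕ, ∀ hk : k < m, (k : ℝ) * (δ - 2 * r) ≤ s ⟨k, hk⟩ - s ⟨0, hm1⟩ := by
    intro k
    induction k with
    | zero => intro hk; simp
    | succ p ih =>
      intro hk
      have hp : p < m := Nat.lt_of_succ_lt hk
      have h1 := ih hp
      have hne : (⟨p, hp⟩ : Fin m) ≠ ⟨p + 1, hk⟩ := by
        simp [Fin.ext_iff]
      have h2 := hsep'' _ _ hne
      have h3 : s ⟨p, hp⟩ ≤ s ⟨p + 1, hk⟩ := hmono (by simp [Fin.le_def])
      rw [abs_sub_comm, abs_of_nonneg (by linarith)] at h2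
      push_cast
      linarith
  have hlast : m - 1 < m := Nat.sub_lt hm1 one_pos
  have h1 := key (m - 1) hlast
  have h2 : s ⟨m - 1, hlast⟩ ≤ L := (ht (σ ⟨m - 1, hlast⟩)).2
  have h3 : 0 ≤ s ⟨0, hm1⟩ := (ht (σ ⟨0, hm1⟩)).1
  have hcast : ((m - 1 : ℕ) : ℝ) = (m : ℝ) - 1 := by
    rw [Nat.cast_sub hm1]; simp
  rw [hcast] at h1
  linarith
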